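/- arXiv:2507.03941 — 6 statements merged into one kernel-verified Lean document; each statement's English description precedes it below -/
import Mathlib

section
/- Iterated carré du champ formula: for sequences f, g : ℤ → ℝ and coefficients α, β : ℤ → ℝ, the operator Γ₂^h(f,g)_i := (1/2)(L_h Γ^h(f,g)_i - Γ^h(f, L_h g)_i - Γ^h(L_h f, g)_i) equals (1/4) α_i (3Δ⁺β_i - Δ⁺α_i) Δ⁺f_i Δ⁺g_i + (1/4) β_i (Δ⁻β_i - 3Δ⁻α_i) Δ⁻f_i Δ⁻g_i + (1/4) α_i α_{i+1} Δ⁺Δ⁺f_i Δ⁺Δ⁺g_i + (1/4) β_i β_{i-1} Δ⁻Δ⁻f_i Δ⁻Δ⁻g_i + (1/2) α_i β_i Δ⁺Δ⁻f_i Δ⁺Δ⁻g_i. -/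
/-- Iterated carré du champ formula: `Γ₂^h(f,g)_i` equals the explicit expression
in terms of first and second differences of `f`, `g` and the coefficients. -/
theorem gamma_two_formula (α β : ℤ → ℝ) (f g : ℤ → ℝ) (i : ℤ)
    (L : (ℤ → ℝ) → ℤ → ℝ)
    (hL : ∀ (F : ℤ → ℝ) (j : ℤ), L F j = α j * (F (j+1) - F j) - β j * (F j - F (j-1)))
    (Γ : (ℤ → ℝ) → (ℤ → ℝ) → ℤ → ℝ)
    (hΓ : ∀ (F G : ℤ → ℝ) (j : ℤ), Γ F G j
      = (1/2) * α j * (F (j+1) - F j) * (G (j+1) - G j)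
        + (1/2) * β j * (F j - F (j-1)) * (G j - G (j-1))) :
    (1/2 : ℝ) * (L (Γ f g) i - Γ f (L g) i - Γ (L f) g i)
      = (1/4) * α i * (3 * (β (i+1) - β i) - (α (i+1) - α i)) * (f (i+1) - f i) * (g (i+1) - g i)
        + (1/4) * β i * ((β i - β (i-1)) - 3 * (α i - α (i-1))) * (f i - f (i-1)) * (g i - g (i-1))
        + (1/4) * α i * α (i+1) * ((f (i+2) - f (i+1)) - (f (i+1) - f i))
            * ((g (i+2) - g (i+1)) - (g (i+1) - g i))
        + (1/4) * β i * β (i-1) * ((f (i-1) - f (i-2)) - (f i - f (i-1)))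
            * ((g (i-1) - g (i-2)) - (g i - g (i-1)))
        + (1/2) * α i * β i * ((f (i+1) - f i) - (f i - f (i-1)))
            * ((g (i+1) - g i) - (g i - g (i-1))) := by
  have hi₁ : i + 1 - 1 = i := by ring
  have hi₂ : i - 1 + 1 = i := by ring
  have hi₃ : i + 1 + 1 = i + 2 := by ring
  have hi₄ : i - 1 - 1 = i - 2 := by ring
  simp only [hL, hΓ, hi₁, hi₂, hi₃, hi₄]
  ring
end

section
/- If α_i, β_i ≥ 0 for all i and the curvature-type bounds 3Δ⁺β_i - Δ⁺α_i ≥ 2λ̃ and Δ⁻β_i - 3Δ⁻α_i ≥ 2λ̃ hold for all i with λ̃ > 0, then Γ₂^h(f,f)_i ≥ λ̃ Γ^h(f,f)_i for all f : ℤ → ℝ and all i. -/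
/-!
Each first-order term of `Γ₂^h` dominates the matching term of `λ̃ Γ^h` by the curvature bounds,
since its weight `α_i` or `β_i` is nonnegative, and the three second-order terms are nonnegative.
-/

lemma half_mul_sq_le_quarter_mul_sq {a c lam : ℝ} (ha : 0 ≤ a) (hc : 2 * lam ≤ c) (x : ℝ) :
    lam * ((1/2) * a * x ^ 2) ≤ (1/4) * a * c * x ^ 2 := by
  nlinarith [mul_nonneg (mul_nonneg ha (sq_nonneg x)) (sub_nonneg.2 hc)]

theorem curvature_condition_general (α β : ℤ → ℝ) (lam : ℝ)
    (hα : ∀ i, 0 ≤ α i) (hβ : ∀ i, 0 ≤ β i)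
    (hcurv1 : ∀ i : ℤ, 3 * (β (i+1) - β i) - (α (i+1) - α i) ≥ 2 * lam)
    (hcurv2 : ∀ i : ℤ, (β i - β (i-1)) - 3 * (α i - α (i-1)) ≥ 2 * lam) :
    ∀ (f : ℤ → ℝ) (i : ℤ),
      (1/4) * α i * (3 * (β (i+1) - β i) - (α (i+1) - α i)) * (f (i+1) - f i)^2
        + (1/4) * β i * ((β i - β (i-1)) - 3 * (α i - α (i-1))) * (f i - f (i-1))^2
        + (1/4) * α i * α (i+1) * ((f (i+2) - f (i+1)) - (f (i+1) - f i))^2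
        + (1/4) * β i * β (i-1) * ((f (i-1) - f (i-2)) - (f i - f (i-1)))^2
        + (1/2) * α i * β i * ((f (i+1) - f i) - (f i - f (i-1)))^2
      ≥ lam * ((1/2) * α i * (f (i+1) - f i)^2 + (1/2) * β i * (f i - f (i-1))^2) := by
  intro f i
  have hforward := half_mul_sq_le_quarter_mul_sq (hα i) (hcurv1 i) (f (i+1) - f i)
  have hbackward := half_mul_sq_le_quarter_mul_sq (hβ i) (hcurv2 i) (f i - f (i-1))
  have := hα i; have := hα (i+1); have := hβ i; have := hβ (i-1)
  have hαα : 0 ≤ (1/4) * α i * α (i+1) * ((f (i+2) - f (i+1)) - (f (i+1) - f i))^2 := by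
    positivity
  have hββ : 0 ≤ (1/4) * β i * β (i-1) * ((f (i-1) - f (i-2)) - (f i - f (i-1)))^2 := by
    positivity
  have hαβ : 0 ≤ (1/2) * α i * β i * ((f (i+1) - f i) - (f i - f (i-1)))^2 := by
    positivity
  linarith

/-- Curvature condition: if `α, β ≥ 0` and the curvature-type lower bounds
`3Δ⁺β_i - Δ⁺α_i ≥ 2λ̃` and `Δ⁻β_i - 3Δ⁻α_i ≥ 2λ̃` hold with `λ̃ > 0`, then
`Γ₂^h(f,f)_i ≥ λ̃ Γ^h(f,f)_i` for all `f` and `i`. -/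
theorem curvature_condition (α β : ℤ → ℝ) (lam : ℝ)
    (hα : ∀ i, 0 ≤ α i) (hβ : ∀ i, 0 ≤ β i) (hlam : 0 < lam)
    (hcurv1 : ∀ i : ℤ, 3 * (β (i+1) - β i) - (α (i+1) - α i) ≥ 2 * lam)
    (hcurv2 : ∀ i : ℤ, (β i - β (i-1)) - 3 * (α i - α (i-1)) ≥ 2 * lam) :
    ∀ (f : ℤ → ℝ) (i : ℤ),
      (1/4) * α i * (3 * (β (i+1) - β i) - (α (i+1) - α i)) * (f (i+1) - f i)^2
        + (1/4) * β i * ((β i - β (i-1)) - 3 * (α i - α (i-1))) * (f i - f (i-1))^2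
        + (1/4) * α i * α (i+1) * ((f (i+2) - f (i+1)) - (f (i+1) - f i))^2
        + (1/4) * β i * β (i-1) * ((f (i-1) - f (i-2)) - (f i - f (i-1)))^2
        + (1/2) * α i * β i * ((f (i+1) - f i) - (f i - f (i-1)))^2
      ≥ lam * ((1/2) * α i * (f (i+1) - f i)^2 + (1/2) * β i * (f i - f (i-1))^2) :=
  curvature_condition_general α β lam hα hβ hcurv1 hcurv2
end

section
/- Lyapunov-weighted energy comparison (integral identity): for real numbers f_i, f_{i+1}, W_i, W_{i+1} with W_i, W_{i+1} > 0, one has (f_{i+1}²/W_{i+1} - f_i²/W_i)(W_{i+1} - W_i) = (f_{i+1} - f_i)² - ∫₀¹ ((f_{i+1} - f_i) - ((f_i + s(f_{i+1}-f_i))/(W_i + s(W_{i+1}-W_i)))(W_{i+1} - W_i))² ds. -/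
/-!
Wherever `w ≠ 0`, the quotient rule gives `w' · (f² / w)' = f'² - (f' - (f / w) w')²`. Along the
affine path `s ↦ (f₀ + s (f₁ - f₀), W₀ + s (W₁ - W₀))` the derivatives `f'`, `w'` are the constant
increments and `w` stays positive, so integrating this identity over `[0, 1]` gives the theorem.
-/

open Set

theorem HasDerivAt.mul_sq_div {𝕜 : Type*} [NontriviallyNormedField 𝕜] {f w : 𝕜 → 𝕜}
    {f' w' x : 𝕜} (hf : HasDerivAt f f' x) (hw : HasDerivAt w w' x) (hx : w x ≠ 0) :
    HasDerivAt (fun y => w' * (f y ^ 2 / w y)) (f' ^ 2 - (f' - f x / w x * w') ^ 2) x := by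
  refine (((hf.fun_pow 2).fun_div hw hx).const_mul w').congr_deriv ?_
  simp only [Nat.cast_ofNat, Nat.add_one_sub_one, pow_one]
  field_simp
  ring

theorem add_mul_sub_pos_of_mem_Icc {a b s : ℝ} (ha : 0 < a) (hb : 0 < b) (hs : s ∈ Icc (0 : ℝ) 1) :
    0 < a + s * (b - a) := by
  obtain ⟨hs₀, hs₁⟩ := hs
  have : a + s * (b - a) = (1 - s) * a + s * b := by ring
  rw [this]
  rcases hs₀.eq_or_lt with rfl | hs₀
  · simpa using ha
  · exact add_pos_of_nonneg_of_pos (mul_nonneg (by linarith) ha.le) (mul_pos hs₀ hb)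

/-- Lyapunov-weighted energy comparison (integral identity). -/
theorem lyapunov_integral_identity (f₀ f₁ W₀ W₁ : ℝ) (hW₀ : 0 < W₀) (hW₁ : 0 < W₁) :
    (f₁^2 / W₁ - f₀^2 / W₀) * (W₁ - W₀)
      = (f₁ - f₀)^2
        - ∫ s in (0:ℝ)..1,
            ((f₁ - f₀) - ((f₀ + s * (f₁ - f₀)) / (W₀ + s * (W₁ - W₀))) * (W₁ - W₀))^2 := by
  set g := fun s : ℝ =>
    ((f₁ - f₀) - ((f₀ + s * (f₁ - f₀)) / (W₀ + s * (W₁ - W₀))) * (W₁ - W₀)) ^ 2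
  have hW : ∀ s ∈ uIcc (0 : ℝ) 1, W₀ + s * (W₁ - W₀) ≠ 0 := fun s hs =>
    (add_mul_sub_pos_of_mem_Icc hW₀ hW₁ (by rwa [uIcc_of_le zero_le_one] at hs)).ne'
  have hderiv : ∀ s ∈ uIcc (0 : ℝ) 1, HasDerivAt
      (fun s => (W₁ - W₀) * ((f₀ + s * (f₁ - f₀)) ^ 2 / (W₀ + s * (W₁ - W₀))))
      ((f₁ - f₀) ^ 2 - g s) s := fun s hs =>
    ((hasDerivAt_mul_const _).const_add f₀).mul_sq_div
      ((hasDerivAt_mul_const _).const_add W₀) (hW s hs)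
  have hg : ContinuousOn g (uIcc 0 1) := by fun_prop (disch := assumption)
  have hFTC := intervalIntegral.integral_eq_sub_of_hasDerivAt hderiv
    (continuousOn_const.sub hg).intervalIntegrable
  rw [intervalIntegral.integral_sub intervalIntegrable_const hg.intervalIntegrable] at hFTC
  simp only [intervalIntegral.integral_const, sub_zero, one_smul, one_mul, zero_mul, add_zero,
    add_sub_cancel] at hFTC
  linear_combination -hFTC
end

section
/- For nonnegative coefficients α, β : ℤ → ℝ and sequences f : ℤ → ℝ, W : ℤ → ℝ with W_i > 0 for all i, the carré du champ comparison Γ^h(f²/W, W)_i ≤ Γ^h(f, f)_i holds for every i ∈ ℤ. -/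
theorem sq_div_sub_sq_div_mul_sub_le_sq_sub {K : Type*} [Field K] [LinearOrder K]
    [IsStrictOrderedRing K] {a b : K} (ha : 0 < a) (hb : 0 < b) (x y : K) :
    (x ^ 2 / a - y ^ 2 / b) * (a - b) ≤ (x - y) ^ 2 := by
  have defect :
      (x - y) ^ 2 - (x ^ 2 / a - y ^ 2 / b) * (a - b) = (x * b - y * a) ^ 2 / (a * b) := by
    field_simp
    ring
  have defect_nonneg : 0 ≤ (x * b - y * a) ^ 2 / (a * b) := by positivity
  linarith

/-- Carré du champ comparison: `Γ^h(f²/W, W)_i ≤ Γ^h(f,f)_i` for positive `W` and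
nonnegative coefficients. -/
theorem carre_du_champ_comparison (α β : ℤ → ℝ)
    (hα : ∀ i, 0 ≤ α i) (hβ : ∀ i, 0 ≤ β i)
    (f W : ℤ → ℝ) (hW : ∀ i, 0 < W i) (i : ℤ) :
    (1/2) * α i * ((f (i+1))^2 / W (i+1) - (f i)^2 / W i) * (W (i+1) - W i)
      + (1/2) * β i * ((f i)^2 / W i - (f (i-1))^2 / W (i-1)) * (W i - W (i-1))
    ≤ (1/2) * α i * (f (i+1) - f i)^2 + (1/2) * β i * (f i - f (i-1))^2 := by
  have forward := mul_le_mul_of_nonneg_left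
    (sq_div_sub_sq_div_mul_sub_le_sq_sub (hW (i+1)) (hW i) (f (i+1)) (f i))
    (mul_nonneg (by norm_num : (0 : ℝ) ≤ 1/2) (hα i))
  have backward := mul_le_mul_of_nonneg_left
    (sq_div_sub_sq_div_mul_sub_le_sq_sub (hW i) (hW (i-1)) (f i) (f (i-1)))
    (mul_nonneg (by norm_num : (0 : ℝ) ≤ 1/2) (hβ i))
  simpa only [mul_assoc] using add_le_add forward backward
end

section
/- If B : ℝ → ℝ is monotonically decreasing with B(0) = 1 and B is differentiable with B'(0) = -1/2, and u satisfies x u'(x) ≥ a x² for |x| > M with a > 0, then there exist h₀ > 0, R > 0, θ > 0 such that for all 0 < h < h₀ and all integers i with |i h| > R: h⁻² B(u((i+1)h) - u(ih)) (e^h - 1) + h⁻² B(u((i-1)h) - u(ih)) (e^{-h} - 1) ≤ -θ whenever i > 0, and the symmetric statement for i < 0 (with the roles of the forward/backward shifts reflecting W(x) = e^{|x|}). -/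
private lemma expBound {h : ℝ} (h0 : 0 < h) (h1 : h ≤ 1) :
    Real.exp h - 1 ≤ h + 3/4 * h^2 ∧ Real.exp (-h) - 1 ≤ -h + 3/4 * h^2 := by
  have hb1 := Real.exp_bound (x := h) (by rw [abs_of_pos h0]; exact h1) (n := 2) (by norm_num)
  have hb2 := Real.exp_bound (x := -h) (by rw [abs_neg, abs_of_pos h0]; exact h1) (n := 2)
    (by norm_num)
  simp only [Finset.sum_range_succ, Finset.sum_range_zero, pow_zero, pow_one,
    Nat.factorial, Nat.cast_ofNat, Nat.cast_one, abs_neg, abs_of_pos h0] at hb1 hb2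
  rw [abs_le] at hb1 hb2
  norm_num at hb1 hb2
  constructor <;> nlinarith [hb1.2, hb2.2]

private lemma mvt (u : ℝ → ℝ) (hu : ContDiff ℝ (⊤ : ℕ∞) u) {x y : ℝ} (hxy : x < y) :
    ∃ c ∈ Set.Ioo x y, u y - u x = deriv u c * (y - x) := by
  obtain ⟨c, hc, hc'⟩ := exists_deriv_eq_slope u hxy hu.continuous.continuousOn
    (hu.differentiable (by simp)).differentiableOn
  refine ⟨c, hc, ?_⟩
  rw [hc', div_mul_cancel₀ _ (sub_ne_zero.mpr hxy.ne')]

private lemma core {c h bp bm : ℝ} (hc : 8 ≤ c) (h0 : 0 < h) (h1 : h ≤ 1)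
    (hch : c * h ≤ 4) (_hbp0 : 0 ≤ bp) (hbp : bp ≤ 1 - c*h/4) (hbm : 1 ≤ bm) :
    h⁻¹^2 * bp * (Real.exp h - 1) + h⁻¹^2 * bm * (Real.exp (-h) - 1) ≤ -(1/2) := by
  obtain ⟨hE, hF⟩ := expBound h0 h1
  have hEpos : 0 < Real.exp h - 1 := by nlinarith [Real.add_one_le_exp h]
  have hFneg : Real.exp (-h) - 1 ≤ 0 := by
    have := Real.exp_le_one_iff.mpr (neg_nonpos.mpr h0.le); linarith
  have key : bp * (Real.exp h - 1) + bm * (Real.exp (-h) - 1) ≤ -(1/2) * h^2 := by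
    have h1' : bp * (Real.exp h - 1) ≤ (1 - c*h/4) * (h + 3/4*h^2) := by
      have ha1 : bp * (Real.exp h - 1) ≤ (1 - c*h/4) * (Real.exp h - 1) :=
        mul_le_mul_of_nonneg_right hbp hEpos.le
      have ha2 : (1 - c*h/4) * (Real.exp h - 1) ≤ (1 - c*h/4) * (h + 3/4*h^2) :=
        mul_le_mul_of_nonneg_left hE (by linarith)
      linarith
    have h2' : bm * (Real.exp (-h) - 1) ≤ Real.exp (-h) - 1 := by nlinarith
    nlinarith [mul_nonneg (mul_nonneg (show (0:ℝ) ≤ c - 8 by linarith) h0.le) h0.le,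
      mul_nonneg (mul_nonneg (mul_nonneg (show (0:ℝ) ≤ c by linarith) h0.le) h0.le) h0.le]
  have hsq : (0:ℝ) < h⁻¹^2 := by positivity
  calc h⁻¹^2 * bp * (Real.exp h - 1) + h⁻¹^2 * bm * (Real.exp (-h) - 1)
      = h⁻¹^2 * (bp * (Real.exp h - 1) + bm * (Real.exp (-h) - 1)) := by ring
    _ ≤ h⁻¹^2 * (-(1/2) * h^2) := mul_le_mul_of_nonneg_left key hsq.le
    _ = -(1/2) := by field_simp

/-- Construction of the Lyapunov function `W(x) = e^{|x|}`: for a drift-condition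
potential `u` and a decreasing `B` with `B 0 = 1`, `B' 0 = -1/2`, there exist
`h₀, R, θ > 0` such that for all `0 < h < h₀` and `|i h| > R`,
`(L_h W)_i / W_i ≤ -θ` (stated separately for `i > 0` and `i < 0`). -/
theorem lyapunov_construction (u : ℝ → ℝ) (B : ℝ → ℝ) (a M : ℝ)
    (hu : ContDiff ℝ (⊤ : ℕ∞) u) (ha : 0 < a) (hM : 0 < M)
    (hdrift : ∀ x : ℝ, |x| > M → x * deriv u x ≥ a * x^2)
    (hBcont : ContDiff ℝ 1 B) (hBanti : Antitone B) (hB0 : B 0 = 1)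
    (hBpos : ∀ s, 0 < B s) (hB'0 : deriv B 0 = -1/2) :
    ∃ h₀ R θ : ℝ, 0 < h₀ ∧ 0 < R ∧ 0 < θ ∧
      ∀ h : ℝ, 0 < h → h < h₀ → ∀ i : ℤ, |(i : ℝ) * h| > R →
        (0 < i →
          h⁻¹^2 * B (u (((i : ℝ) + 1) * h) - u ((i : ℝ) * h)) * (Real.exp h - 1)
            + h⁻¹^2 * B (u (((i : ℝ) - 1) * h) - u ((i : ℝ) * h)) * (Real.exp (-h) - 1)
          ≤ -θ) ∧
        (i < 0 →
          h⁻¹^2 * B (u (((i : ℝ) + 1) * h) - u ((i : ℝ) * h)) * (Real.exp (-h) - 1)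
            + h⁻¹^2 * B (u (((i : ℝ) - 1) * h) - u ((i : ℝ) * h)) * (Real.exp h - 1)
          ≤ -θ) := by
  -- Step 1: from B'(0) = -1/2 get δ with B s ≤ 1 - s/4 for 0 < s < δ
  obtain ⟨δ, hδ, hBsmall⟩ : ∃ δ > 0, ∀ s : ℝ, 0 < s → s < δ → B s ≤ 1 - s/4 := by
    have hdB : HasDerivAt B (-1/2) 0 := by
      rw [← hB'0]
      exact ((hBcont.differentiable one_ne_zero) 0).hasDerivAt
    have hev : ∀ᶠ s in nhdsWithin 0 {(0:ℝ)}ᶜ, slope B 0 s < -1/4 :=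
      (hasDerivAt_iff_tendsto_slope.mp hdB).eventually_lt_const (by norm_num)
    rw [eventually_nhdsWithin_iff, Metric.eventually_nhds_iff] at hev
    obtain ⟨ε, hε, H⟩ := hev
    refine ⟨ε, hε, fun s hs hsδ => ?_⟩
    have hsl := H (show dist s 0 < ε by
        simp [Real.dist_eq, abs_of_pos hs, hsδ])
      (show s ∈ ({(0:ℝ)}ᶜ : Set ℝ) by simp [hs.ne'])
    rw [slope_def_field, hB0] at hsl
    have h2 : (B s - 1) / (s - 0) * s < -1/4 * s :=
      mul_lt_mul_of_pos_right hsl hs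
    rw [sub_zero, div_mul_cancel₀ _ hs.ne'] at h2
    linarith
  set R : ℝ := max (M + 1) (8 / a) with hRdef
  have hRM : M + 1 ≤ R := le_max_left _ _
  have hR0 : 0 < R := by linarith
  have haR : 8 ≤ a * R := by
    have h8 : 8 / a ≤ R := le_max_right _ _
    have h9 : a * (8 / a) ≤ a * R := mul_le_mul_of_nonneg_left h8 ha.le
    rwa [mul_div_cancel₀ _ ha.ne'] at h9
  have haR0 : 0 < a * R := mul_pos ha hR0
  refine ⟨min 1 (min (4 / (a * R)) (δ / (a * R))), R, 1/2,
    lt_min one_pos (lt_min (by positivity) (by positivity)), hR0, by norm_num, ?_⟩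
  intro h hh hh0 i hi
  obtain ⟨hh1, hh4, hhδ⟩ : h < 1 ∧ h < 4 / (a * R) ∧ h < δ / (a * R) := by
    rw [lt_min_iff, lt_min_iff] at hh0; tauto
  have hch4 : a * R * h ≤ 4 := by
    have := (lt_div_iff₀ haR0).mp hh4; linarith
  have hchδ : a * R * h < δ := by
    have := (lt_div_iff₀ haR0).mp hhδ; linarith
  have hBsm : B (a * R * h) ≤ 1 - a * R * h / 4 :=
    hBsmall _ (by positivity) hchδ
  constructor
  · -- i > 0
    intro hipos
    rw [show ((i : ℝ) + 1) * h = (i : ℝ) * h + h from by ring,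
        show ((i : ℝ) - 1) * h = (i : ℝ) * h - h from by ring]
    set x : ℝ := (i : ℝ) * h with hxdef
    have hipos' : (0:ℝ) < (i : ℝ) := by exact_mod_cast hipos
    have hxpos : 0 < x := mul_pos hipos' hh
    have hxR : R < x := by rwa [abs_of_pos hxpos] at hi
    -- forward increment
    have hplus : a * R * h ≤ u (x + h) - u x := by
      obtain ⟨c, hc, hceq⟩ := mvt u hu (show x < x + h by linarith)
      have hcR : R < c := lt_trans hxR hc.1
      have hcpos : 0 < c := lt_trans hR0 hcR
      have hd := hdrift c (by rw [abs_of_pos hcpos]; linarith)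
      rw [ge_iff_le, show a * c^2 = c * (a * c) from by ring] at hd
      have huc : a * c ≤ deriv u c := (mul_le_mul_iff_right₀ hcpos).mp hd
      rw [hceq, add_sub_cancel_left]
      have h1 : a * R ≤ deriv u c :=
        le_trans (mul_le_mul_of_nonneg_left hcR.le ha.le) huc
      exact mul_le_mul_of_nonneg_right h1 hh.le
    -- backward increment
    have hminus : u (x - h) - u x ≤ 0 := by
      obtain ⟨c, hc, hceq⟩ := mvt u hu (show x - h < x by linarith)
      have hcM : M < c := by have := hc.1; linarith
      have hcpos : 0 < c := lt_trans hM hcM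
      have hd := hdrift c (by rw [abs_of_pos hcpos]; linarith)
      rw [ge_iff_le, show a * c^2 = c * (a * c) from by ring] at hd
      have huc : a * c ≤ deriv u c := (mul_le_mul_iff_right₀ hcpos).mp hd
      have hd0 : 0 ≤ deriv u c := le_trans (mul_pos ha hcpos).le huc
      have h1 : 0 ≤ u x - u (x - h) := by
        rw [hceq, sub_sub_cancel]
        exact mul_nonneg hd0 hh.le
      linarith
    have hbp : B (u (x + h) - u x) ≤ 1 - a * R * h / 4 :=
      le_trans (hBanti hplus) hBsm
    have hbm : 1 ≤ B (u (x - h) - u x) := by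
      rw [← hB0]; exact hBanti hminus
    exact core haR hh hh1.le hch4 (hBpos _).le hbp hbm
  · -- i < 0
    intro hineg
    rw [show ((i : ℝ) + 1) * h = (i : ℝ) * h + h from by ring,
        show ((i : ℝ) - 1) * h = (i : ℝ) * h - h from by ring]
    set x : ℝ := (i : ℝ) * h with hxdef
    have hineg' : (i : ℝ) < 0 := by exact_mod_cast hineg
    have hxneg : x < 0 := mul_neg_of_neg_of_pos hineg' hh
    have hxR : x < -R := by
      rw [abs_of_neg hxneg] at hi; linarith
    -- backward increment (large)
    have hminus : a * R * h ≤ u (x - h) - u x := by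
      obtain ⟨c, hc, hceq⟩ := mvt u hu (show x - h < x by linarith)
      have hcR : c < -R := lt_trans hc.2 hxR
      have hcneg : c < 0 := by linarith
      have hd := hdrift c (by rw [abs_of_neg hcneg]; linarith)
      rw [ge_iff_le, show a * c^2 = c * (a * c) from by ring] at hd
      have huc : deriv u c ≤ a * c := (mul_le_mul_left_of_neg hcneg).mp hd
      have h2 : deriv u c ≤ a * (-R) :=
        le_trans huc (mul_le_mul_of_nonneg_left (by linarith) ha.le)
      have h1 : deriv u c * h ≤ (a * (-R)) * h :=
        mul_le_mul_of_nonneg_right h2 hh.le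
      have h3 : u x - u (x - h) ≤ -(a * R * h) := by
        rw [hceq, sub_sub_cancel]; linarith
      linarith
    -- forward increment (≤ 0)
    have hplus : u (x + h) - u x ≤ 0 := by
      obtain ⟨c, hc, hceq⟩ := mvt u hu (show x < x + h by linarith)
      have hcM : c < -M := by have := hc.2; linarith
      have hcneg : c < 0 := by linarith
      have hd := hdrift c (by rw [abs_of_neg hcneg]; linarith)
      rw [ge_iff_le, show a * c^2 = c * (a * c) from by ring] at hd
      have huc : deriv u c ≤ a * c := (mul_le_mul_left_of_neg hcneg).mp hd
      have hd0 : deriv u c ≤ 0 :=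
        le_trans huc (mul_neg_of_pos_of_neg ha hcneg).le
      rw [hceq, add_sub_cancel_left]
      exact mul_nonpos_of_nonpos_of_nonneg hd0 hh.le
    have hbp : B (u (x - h) - u x) ≤ 1 - a * R * h / 4 :=
      le_trans (hBanti hminus) hBsm
    have hbm : 1 ≤ B (u (x + h) - u x) := by
      rw [← hB0]; exact hBanti hplus
    have hcore := core haR hh hh1.le hch4 (hBpos _).le hbp hbm
    linarith
end

section
/- Jensen-type squared-telescoping bound: for f : ℤ → ℝ, nonnegative weights π̂_j summing to 1 over j ∈ {-N,...,N}, and i ∈ {-N,...,N}: (f_i - ∑_{j=-N}^N f_j π̂_j)² ≤ ∑_{k=-N}^{i-1} (∑_{j=-N}^{k} π̂_j (i-j)) (f_{k+1} - f_k)² + ∑_{k=i+1}^{N} (∑_{j=k}^{N} π̂_j (j-i)) (f_{k-1} - f_k)². -/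
/-!
Since the weights sum to one, `f i - ∑ f j π̂ j = ∑ π̂ j (f i - f j)`, and Jensen's inequality
bounds its square by `∑ π̂ j (f i - f j)²`. For `j < i`, Cauchy–Schwarz applied to the telescoping
sum `f i - f j = ∑_{k=j}^{i-1} (f (k+1) - f k)` gives
`(f i - f j)² ≤ (i - j) ∑_{k=j}^{i-1} (f (k+1) - f k)²`; exchanging the order of summation yields
the first sum of the bound. The terms with `j > i` are the mirror image under `k ↦ -k`.
-/

open Finset

theorem Finset.sq_sum_mul_le_sum_mul_sq {ι R : Type*} [CommRing R] [LinearOrder R]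
    [IsStrictOrderedRing R] (s : Finset ι) {w x : ι → R} (hw : ∀ i ∈ s, 0 ≤ w i)
    (hw₁ : ∑ i ∈ s, w i = 1) :
    (∑ i ∈ s, w i * x i) ^ 2 ≤ ∑ i ∈ s, w i * x i ^ 2 := by
  simpa [hw₁] using sum_sq_le_sum_mul_sum_of_sq_le_mul s hw
    (fun i hi => mul_nonneg (hw i hi) (sq_nonneg (x i)))
    (fun i _ => (by ring : (w i * x i) ^ 2 = w i * (w i * x i ^ 2)).le)

namespace Int

theorem sum_Ico_sub {M : Type*} [AddCommGroup M] (f : ℤ → M) {a b : ℤ} (hab : a ≤ b) :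
    ∑ k ∈ Ico a b, (f (k + 1) - f k) = f b - f a := by
  induction b, hab using Int.leInduction with
  | base => simp
  | succ n hn ih =>
    rw [← insert_Ico_right_eq_Ico_add_one hn, sum_insert right_notMem_Ico, ih]
    abel

section AddCommMonoid

variable {M : Type*} [AddCommMonoid M]

theorem sum_Ioc_eq_sum_Ico_neg (g : ℤ → M) (a b : ℤ) :
    ∑ k ∈ Ioc a b, g k = ∑ k ∈ Ico (-b) (-a), g (-k) :=
  sum_nbij' (- ·) (- ·)
    (fun k hk => by simp only [mem_Ioc, mem_Ico] at hk ⊢; omega)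
    (fun k hk => by simp only [mem_Ioc, mem_Ico] at hk ⊢; omega)
    (fun k _ => neg_neg k) (fun k _ => neg_neg k) (fun k _ => by rw [neg_neg])

theorem sum_Icc_eq_sum_Icc_neg (g : ℤ → M) (a b : ℤ) :
    ∑ k ∈ Icc a b, g k = ∑ k ∈ Icc (-b) (-a), g (-k) :=
  sum_nbij' (- ·) (- ·)
    (fun k hk => by simp only [mem_Icc] at hk ⊢; omega)
    (fun k hk => by simp only [mem_Icc] at hk ⊢; omega)
    (fun k _ => neg_neg k) (fun k _ => neg_neg k) (fun k _ => by rw [neg_neg])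

theorem sum_Icc_eq_sum_Ico_add_add_sum_Ioc (g : ℤ → M) {a b i : ℤ} (hi : i ∈ Icc a b) :
    ∑ k ∈ Icc a b, g k = ∑ k ∈ Ico a i, g k + g i + ∑ k ∈ Ioc i b, g k := by
  rw [mem_Icc] at hi
  rw [← Ico_add_one_right_eq_Icc, ← Ico_union_Ico_eq_Ico hi.1 (by omega),
    sum_union (Ico_disjoint_Ico_consecutive a i (b + 1)), Ico_add_one_right_eq_Icc,
    Icc_eq_cons_Ioc hi.2, sum_cons, add_assoc]

end AddCommMonoid

section OrderedRing

variable {R : Type*} [CommRing R] [LinearOrder R] [IsStrictOrderedRing R]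

theorem sq_sub_le_mul_sum_Ico_sq_sub (f : ℤ → R) {a b : ℤ} (hab : a ≤ b) :
    (f b - f a) ^ 2 ≤ ((b : R) - a) * ∑ k ∈ Ico a b, (f (k + 1) - f k) ^ 2 := by
  have hcard : (#(Ico a b) : R) = (b : R) - a := by
    rw [Int.card_Ico, ← Int.cast_natCast, Int.toNat_of_nonneg (by omega), Int.cast_sub]
  rw [← sum_Ico_sub f hab, ← hcard]
  exact sq_sum_le_card_mul_sum_sq

theorem sum_Ico_mul_sq_sub_le (f w : ℤ → R) {a i : ℤ} (hw : ∀ j ∈ Ico a i, 0 ≤ w j) :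
    ∑ j ∈ Ico a i, w j * (f i - f j) ^ 2
      ≤ ∑ k ∈ Ico a i, (∑ j ∈ Icc a k, w j * ((i : R) - j)) * (f (k + 1) - f k) ^ 2 :=
  calc ∑ j ∈ Ico a i, w j * (f i - f j) ^ 2
      ≤ ∑ j ∈ Ico a i, ∑ k ∈ Ico j i, w j * ((i : R) - j) * (f (k + 1) - f k) ^ 2 := by
        refine sum_le_sum fun j hj => ?_
        rw [← mul_sum, mul_assoc]
        exact mul_le_mul_of_nonneg_left
          (sq_sub_le_mul_sum_Ico_sq_sub f (mem_Ico.1 hj).2.le) (hw j hj)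
    _ = ∑ k ∈ Ico a i, (∑ j ∈ Icc a k, w j * ((i : R) - j)) * (f (k + 1) - f k) ^ 2 := by
        rw [sum_comm' (t' := Ico a i) (s' := fun k => Icc a k)
          (fun j k => by simp only [mem_Ico, mem_Icc]; omega)]
        simp only [sum_mul]

theorem sum_Ioc_mul_sq_sub_le (f w : ℤ → R) {i b : ℤ} (hw : ∀ j ∈ Ioc i b, 0 ≤ w j) :
    ∑ j ∈ Ioc i b, w j * (f i - f j) ^ 2
      ≤ ∑ k ∈ Ioc i b, (∑ j ∈ Icc k b, w j * ((j : R) - i)) * (f (k - 1) - f k) ^ 2 := by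
  have hreflected := sum_Ico_mul_sq_sub_le (fun k => f (-k)) (fun k => w (-k)) (a := -b) (i := -i)
    (fun j hj => hw (-j) (by rw [mem_Ico] at hj; rw [mem_Ioc]; omega))
  simp only [neg_neg] at hreflected
  rw [sum_Ioc_eq_sum_Ico_neg, sum_Ioc_eq_sum_Ico_neg]
  convert hreflected using 3 with k
  · rw [sum_Icc_eq_sum_Icc_neg, neg_neg]
    refine sum_congr rfl fun j _ => ?_
    push_cast
    ring
  · rw [neg_add']

end OrderedRing

end Int

/-- Jensen-type squared-telescoping bound. -/
theorem jensen_telescoping_bound (N : ℕ) (f piH : ℤ → ℝ)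
    (hpi : ∀ j ∈ Finset.Icc (-(N:ℤ)) N, 0 ≤ piH j)
    (hsum : ∑ j ∈ Finset.Icc (-(N:ℤ)) N, piH j = 1)
    (i : ℤ) (hi : i ∈ Finset.Icc (-(N:ℤ)) N) :
    (f i - ∑ j ∈ Finset.Icc (-(N:ℤ)) N, f j * piH j)^2
      ≤ (∑ k ∈ Finset.Icc (-(N:ℤ)) (i-1),
            (∑ j ∈ Finset.Icc (-(N:ℤ)) k, piH j * ((i : ℝ) - j)) * (f (k+1) - f k)^2)
        + ∑ k ∈ Finset.Icc (i+1) (N:ℤ),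
            (∑ j ∈ Finset.Icc k (N:ℤ), piH j * ((j : ℝ) - i)) * (f (k-1) - f k)^2 := by
  have hcentered : f i - ∑ j ∈ Icc (-(N:ℤ)) N, f j * piH j
      = ∑ j ∈ Icc (-(N:ℤ)) N, piH j * (f i - f j) := by
    simp only [mul_sub, sum_sub_distrib, mul_comm (piH _) (f _), ← mul_sum, hsum, mul_one]
  rw [Icc_sub_one_right_eq_Ico, Icc_add_one_left_eq_Ioc, hcentered]
  calc (∑ j ∈ Icc (-(N:ℤ)) N, piH j * (f i - f j)) ^ 2
      ≤ ∑ j ∈ Icc (-(N:ℤ)) N, piH j * (f i - f j) ^ 2 := sq_sum_mul_le_sum_mul_sq _ hpi hsum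
    _ = ∑ j ∈ Ico (-(N:ℤ)) i, piH j * (f i - f j) ^ 2
          + ∑ j ∈ Ioc i (N:ℤ), piH j * (f i - f j) ^ 2 := by
        rw [Int.sum_Icc_eq_sum_Ico_add_add_sum_Ioc _ hi, sub_self]
        ring
    _ ≤ _ := add_le_add
        (Int.sum_Ico_mul_sq_sub_le f piH fun j hj =>
          hpi j (Ico_subset_Icc_self (Ico_subset_Ico_right (mem_Icc.1 hi).2 hj)))
        (Int.sum_Ioc_mul_sq_sub_le f piH fun j hj =>
          hpi j (Icc_subset_Icc_left (mem_Icc.1 hi).1 (Ioc_subset_Icc_self hj)))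
end
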